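/- For k ≥ 0 and n > 0, with f = G^k D G^{2n} on {a,c}^* (G(a)=a, G(c)=ac; D(a)=ca, D(c)=c), one has f(a) = a^k c a and f(c) = (a^k c a)^{2n} a^k c. -/
import Mathlib


/-- The two-letter alphabet `{a, c}`. -/
inductive AC | a | c
deriving DecidableEq, Repr

/-- Apply a substitution (given on letters) to a word. -/
def applyM (h : AC → List AC) (w : List AC) : List AC := w.flatMap h

/-- Composition of substitutions: apply `g` first, then `f`. -/
def compM (f g : AC → List AC) : AC → List AC := fun x => applyM f (g x)

/-- Iterated composition of a substitution. -/
def powM (f : AC → List AC) : ℕ → (AC → List AC)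
  | 0 => fun x => [x]
  | k + 1 => compM f (powM f k)

/-- The `m`-th power (repeated concatenation) of a word. -/
def wpow (w : List AC) : ℕ → List AC
  | 0 => []
  | m + 1 => w ++ wpow w m

/-- The Sturmian generator `G`: `G(a) = a`, `G(c) = ac`. -/
def G : AC → List AC
  | AC.a => [AC.a]
  | AC.c => [AC.a, AC.c]

/-- The Sturmian generator `D`: `D(a) = ca`, `D(c) = c`. -/
def D : AC → List AC
  | AC.a => [AC.c, AC.a]
  | AC.c => [AC.c]

lemma applyM_append (h : AC → List AC) (u v : List AC) :
    applyM h (u ++ v) = applyM h u ++ applyM h v := by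
  simp [applyM]

lemma powG_a (m : ℕ) : powM G m AC.a = [AC.a] := by
  induction m with
  | zero => rfl
  | succ m ih => simp [powM, compM, ih, applyM, G]

lemma G_rep (m : ℕ) : (List.replicate m AC.a).flatMap G = List.replicate m AC.a := by
  induction m with
  | zero => rfl
  | succ m ih => simp [List.replicate_succ, G] at *; exact ih

lemma powG_c (m : ℕ) : powM G m AC.c = List.replicate m AC.a ++ [AC.c] := by
  induction m with
  | zero => rfl
  | succ m ih =>
    simp only [powM, compM, ih, applyM, List.flatMap_append, G_rep]
    rw [show [AC.c].flatMap G = [AC.a] ++ [AC.c] from rfl, ← List.append_assoc,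
      ← List.replicate_succ', List.replicate_succ]

lemma applyM_replicate_a (m : ℕ) :
    applyM D (List.replicate m AC.a) = wpow [AC.c, AC.a] m := by
  induction m with
  | zero => rfl
  | succ m ih => simp [List.replicate_succ, applyM, wpow, D] at *; exact ih

lemma applyM_wpow (h : AC → List AC) (w : List AC) (m : ℕ) :
    applyM h (wpow w m) = wpow (applyM h w) m := by
  induction m with
  | zero => rfl
  | succ m ih => simp [wpow, applyM_append, ih]

lemma Gk_ca (k : ℕ) :
    applyM (powM G k) [AC.c, AC.a] = List.replicate k AC.a ++ [AC.c, AC.a] := by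
  simp [applyM, powG_a, powG_c]

theorem stmt14 (k n : ℕ) (hn : 0 < n) :
    (compM (powM G k) (compM D (powM G (2 * n)))) AC.a =
      List.replicate k AC.a ++ [AC.c, AC.a] ∧
    (compM (powM G k) (compM D (powM G (2 * n)))) AC.c =
      wpow (List.replicate k AC.a ++ [AC.c, AC.a]) (2 * n) ++
        List.replicate k AC.a ++ [AC.c] := by
  constructor
  · show applyM (powM G k) (applyM D (powM G (2*n) AC.a)) = _
    rw [powG_a]
    show applyM (powM G k) [AC.c, AC.a] = _
    exact Gk_ca k
  · show applyM (powM G k) (applyM D (powM G (2*n) AC.c)) = _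
    rw [powG_c, applyM_append, applyM_replicate_a, applyM_append, applyM_wpow,
      Gk_ca]
    simp [applyM, D, powG_c]
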